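/- arXiv:2308.06847 — 3 statements merged into one kernel-verified Lean document; each statement's English description precedes it below -/
import Mathlib

section
/- Let T > 0. There exist constants C > 0 and c > 0, depending only on T, such that for every bounded Borel measurable ψ : [0,T] → ℝ, the spatial derivative of the boundary-driven heat solution u(t,x) = −2∫₀ᵗ ∂ₓG(t−τ, x) ψ(τ) dτ satisfies |∂ₓu(t,x)| ≤ C(x^{−1} 1_{x≤1} + e^{−cx} 1_{x>1}) · sup_{[0,T]}|ψ| for all t ∈ (0,T] and x > 0. -/
/-!
Differentiating under the integral, `∂ₓu(t,x) = −2∫₀ᵗ ∂ₓ²G(t−τ,x) ψ(τ) dτ`, and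
`|∂ₓ²G(s,x)| ≤ π^{−1/2} s^{−3/2} e^{−x²/(8s)}`. Splitting `e^{−x²/(8s)}` into two factors
`e^{−x²/(16s)}` and bounding one of them by `e^{−x²/(16T)}` (as `s ≤ T`) leaves the integral
`∫₀^∞ s^{−3/2} e^{−b/s} ds = √(π/b)` with `b = x²/16`, which the substitution `s = 1/u` turns into
`Γ(1/2) b^{−1/2}`. Hence `|∂ₓu(t,x)| ≤ 8 M e^{−x²/(16T)} / x`, which is at most `8M/x` for `x ≤ 1`
and at most `8M e^{−x/(16T)}` for `x > 1`.
-/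

/-- The spatial derivative of the heat kernel,
`∂ₓG(t,x) = −(1/(4√π)) t^{−3/2} x exp(−x²/(4t))`. -/
noncomputable def heatGx (t x : ℝ) : ℝ :=
  -(1 / (4 * Real.sqrt Real.pi)) * t ^ (-(3 : ℝ) / 2) * x * Real.exp (-(x ^ 2) / (4 * t))

/-- The boundary-driven heat solution `u(t,x) = −2∫₀ᵗ ∂ₓG(t−τ, x) ψ(τ) dτ`. -/
noncomputable def heatU (ψ : ℝ → ℝ) (t x : ℝ) : ℝ :=
  -2 * ∫ τ in (0 : ℝ)..t, heatGx (t - τ) x * ψ τ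

open Real MeasureTheory Set
open scoped Interval

/-- Up to normalisation, the density of the Lévy distribution (a first-passage time). -/
noncomputable def levyKernel (b s : ℝ) : ℝ := s ^ (-(3 : ℝ) / 2) * exp (-b / s)

section LevyKernel

variable {b s : ℝ}

lemma levyKernel_nonneg (hs : 0 ≤ s) : 0 ≤ levyKernel b s := by
  unfold levyKernel; positivity

lemma levyKernel_le_of_le {b' : ℝ} (hbb' : b' ≤ b) (hs : 0 ≤ s) :
    levyKernel b s ≤ levyKernel b' s := by
  unfold levyKernel; gcongr

lemma levyKernel_add_le {b' T : ℝ} (hb : 0 ≤ b) (hs : 0 ≤ s) (hsT : s ≤ T) :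
    levyKernel (b + b') s ≤ exp (-b / T) * levyKernel b' s := by
  rcases hs.eq_or_lt with rfl | hs
  · simp [levyKernel]
  have hT : exp (-b / s) ≤ exp (-b / T) := by
    rw [neg_div, neg_div]; gcongr
  calc levyKernel (b + b') s = exp (-b / s) * levyKernel b' s := by
        rw [levyKernel, levyKernel, neg_add, add_div, exp_add]; ring
    _ ≤ exp (-b / T) * levyKernel b' s := by
        gcongr; exact levyKernel_nonneg hs.le

theorem integral_levyKernel_Ioi (hb : 0 < b) : ∫ s in Ioi 0, levyKernel b s = √(π / b) := by
  have hsubst (u : ℝ) (hu : u ∈ Ioi 0) :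
      (|(-1 : ℝ)| * u ^ ((-1 : ℝ) - 1)) • levyKernel b (u ^ (-1 : ℝ))
        = u ^ ((1 / 2 : ℝ) - 1) * exp (-(b * u)) := by
    rw [levyKernel, smul_eq_mul, rpow_neg_one, inv_rpow (le_of_lt hu), ← rpow_neg (le_of_lt hu),
      abs_neg, abs_one, one_mul, ← mul_assoc, ← rpow_add hu]
    congr 2
    · norm_num
    · field_simp
  rw [← integral_comp_rpow_Ioi _ (by norm_num : (-1 : ℝ) ≠ 0),
    setIntegral_congr_fun measurableSet_Ioi hsubst,
    integral_rpow_mul_exp_neg_mul_Ioi one_half_pos hb, Gamma_one_half_eq,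
    sqrt_eq_rpow, sqrt_eq_rpow, div_eq_mul_one_div π, mul_rpow pi_pos.le (by positivity), mul_comm]

theorem integrableOn_levyKernel_Ioi (hb : 0 < b) : IntegrableOn (levyKernel b) (Ioi 0) :=
  Integrable.of_integral_ne_zero (by rw [integral_levyKernel_Ioi hb]; positivity)

theorem intervalIntegrable_levyKernel_sub (hb : 0 < b) {t : ℝ} (ht : 0 ≤ t) :
    IntervalIntegrable (fun τ => levyKernel b (t - τ)) volume 0 t := by
  have h : IntervalIntegrable (levyKernel b) volume 0 t :=
    (intervalIntegrable_iff_integrableOn_Ioc_of_le ht).2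
      ((integrableOn_levyKernel_Ioi hb).mono_set Ioc_subset_Ioi_self)
  simpa using (h.comp_sub_left t).symm

theorem integral_levyKernel_sub_le (hb : 0 < b) {t : ℝ} (ht : 0 ≤ t) :
    ∫ τ in 0..t, levyKernel b (t - τ) ≤ √(π / b) := by
  rw [intervalIntegral.integral_comp_sub_left (levyKernel b), sub_self, sub_zero,
    intervalIntegral.integral_of_le ht, ← integral_levyKernel_Ioi hb]
  exact setIntegral_mono_set (integrableOn_levyKernel_Ioi hb)
    ((ae_restrict_mem measurableSet_Ioi).mono fun s hs => levyKernel_nonneg (le_of_lt hs))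
    Ioc_subset_Ioi_self.eventuallyLE

end LevyKernel

noncomputable def heatGxx (t x : ℝ) : ℝ :=
  -(1 / (4 * √π)) * t ^ (-(3 : ℝ) / 2) * (1 - x ^ 2 / (2 * t)) * exp (-(x ^ 2) / (4 * t))

lemma hasDerivAt_heatGx (t x : ℝ) : HasDerivAt (heatGx t) (heatGxx t x) x := by
  set C := -(1 / (4 * √π)) * t ^ (-(3 : ℝ) / 2)
  have hexp : HasDerivAt (fun y => exp (-(y ^ 2) / (4 * t)))
      (exp (-(x ^ 2) / (4 * t)) * (-(2 * x) / (4 * t))) x := by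
    simpa using ((hasDerivAt_pow 2 x).fun_neg.div_const (4 * t)).exp
  have hG : heatGx t = fun y => C * (y * exp (-(y ^ 2) / (4 * t))) := by
    funext y; unfold heatGx; ring
  rw [hG]
  refine (((hasDerivAt_id' x).fun_mul hexp).const_mul C).congr_deriv ?_
  unfold heatGxx; ring

lemma heatGx_eq_levyKernel (t x : ℝ) :
    heatGx t x = -(x / (4 * √π)) * levyKernel (x ^ 2 / 4) t := by
  rw [heatGx, levyKernel]; ring_nf

lemma abs_one_sub_half_mul_exp_le {a : ℝ} (ha : 0 ≤ a) :
    |1 - a / 2| * exp (-(a / 4)) ≤ 4 * exp (-(a / 8)) := by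
  have h : |1 - a / 2| ≤ 4 * exp (a / 8) := by
    have := add_one_le_exp (a / 8)
    rw [abs_le]; constructor <;> linarith
  calc |1 - a / 2| * exp (-(a / 4)) ≤ 4 * exp (a / 8) * exp (-(a / 4)) := by gcongr
    _ = 4 * exp (-(a / 8)) := by rw [mul_assoc, ← exp_add]; ring_nf

lemma abs_heatGxx_le {t : ℝ} (ht : 0 ≤ t) (x : ℝ) :
    |heatGxx t x| ≤ (√π)⁻¹ * levyKernel (x ^ 2 / 8) t := by
  have hform : heatGxx t x =
      -(1 / (4 * √π)) * t ^ (-(3 : ℝ) / 2) * ((1 - x ^ 2 / t / 2) * exp (-(x ^ 2 / t / 4))) := by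
    rw [heatGxx]; ring_nf
  have hkernel : levyKernel (x ^ 2 / 8) t = t ^ (-(3 : ℝ) / 2) * exp (-(x ^ 2 / t / 8)) := by
    rw [levyKernel]; ring_nf
  rw [hform, hkernel, abs_mul, abs_mul, abs_neg, abs_of_nonneg (by positivity : 0 ≤ 1 / (4 * √π)),
    abs_of_nonneg (rpow_nonneg ht _)]
  calc 1 / (4 * √π) * t ^ (-(3 : ℝ) / 2) * |(1 - x ^ 2 / t / 2) * exp (-(x ^ 2 / t / 4))|
      ≤ 1 / (4 * √π) * t ^ (-(3 : ℝ) / 2) * (4 * exp (-(x ^ 2 / t / 8))) := by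
        rw [abs_mul, abs_of_pos (exp_pos _)]
        gcongr ?_ * ?_
        exact abs_one_sub_half_mul_exp_le (by positivity)
    _ = (√π)⁻¹ * (t ^ (-(3 : ℝ) / 2) * exp (-(x ^ 2 / t / 8))) := by ring

lemma norm_heatGx_mul_le {s p M : ℝ} (hs : 0 ≤ s) (hp : |p| ≤ M) {x : ℝ} (hx : 0 ≤ x) :
    ‖heatGx s x * p‖ ≤ x / (4 * √π) * levyKernel (x ^ 2 / 4) s * M := by
  rw [norm_mul, Real.norm_eq_abs, Real.norm_eq_abs, heatGx_eq_levyKernel, abs_mul, abs_neg,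
    abs_of_nonneg (by positivity : 0 ≤ x / (4 * √π)), abs_of_nonneg (levyKernel_nonneg hs)]
  exact mul_le_mul_of_nonneg_left hp (mul_nonneg (by positivity) (levyKernel_nonneg hs))

lemma norm_heatGxx_mul_le {s p M : ℝ} (hs : 0 ≤ s) (hp : |p| ≤ M) (y : ℝ) :
    ‖heatGxx s y * p‖ ≤ (√π)⁻¹ * levyKernel (y ^ 2 / 8) s * M := by
  rw [norm_mul, Real.norm_eq_abs, Real.norm_eq_abs]
  exact mul_le_mul (abs_heatGxx_le hs y) hp (abs_nonneg _)
    (mul_nonneg (by positivity) (levyKernel_nonneg hs))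

section BoundaryDriven

variable {ψ : ℝ → ℝ} {M t x : ℝ}

theorem hasDerivAt_heatU (hψ : Measurable ψ) (hM : ∀ τ ∈ Ioc 0 t, |ψ τ| ≤ M) (ht : 0 < t)
    (hx : 0 < x) : HasDerivAt (heatU ψ t) (-2 * ∫ τ in 0..t, heatGxx (t - τ) x * ψ τ) x := by
  have hΙ : Ι 0 t = Ioc 0 t := uIoc_of_le ht.le
  have hF_meas (y : ℝ) :
      AEStronglyMeasurable (fun τ => heatGx (t - τ) y * ψ τ) (volume.restrict (Ι 0 t)) :=
    (Measurable.mul (by unfold heatGx; fun_prop) hψ).aestronglyMeasurable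
  have hF'_meas :
      AEStronglyMeasurable (fun τ => heatGxx (t - τ) x * ψ τ) (volume.restrict (Ι 0 t)) :=
    (Measurable.mul (by unfold heatGxx; fun_prop) hψ).aestronglyMeasurable
  have hF_int : IntervalIntegrable (fun τ => heatGx (t - τ) x * ψ τ) volume 0 t :=
    (((intervalIntegrable_levyKernel_sub (b := x ^ 2 / 4) (by positivity) ht.le).const_mul
      (x / (4 * √π))).mul_const M).mono_fun'
      (hF_meas x) (ae_restrict_of_forall_mem measurableSet_uIoc fun τ hτ => by
        rw [hΙ] at hτ
        exact norm_heatGx_mul_le (sub_nonneg.2 hτ.2) (hM τ hτ) hx.le)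
  -- On the ball of radius `x/2` around `x` we have `y² > x²/4`, which gives a uniform majorant.
  have h_bound : ∀ᵐ τ, τ ∈ Ι 0 t → ∀ y ∈ Metric.ball x (x / 2),
      ‖heatGxx (t - τ) y * ψ τ‖ ≤ (√π)⁻¹ * levyKernel (x ^ 2 / 32) (t - τ) * M := by
    refine ae_of_all _ fun τ hτ y hy => ?_
    rw [hΙ] at hτ
    have hs : 0 ≤ t - τ := sub_nonneg.2 hτ.2
    have hxy : x / 2 < y := by
      rw [Metric.mem_ball, Real.dist_eq, abs_sub_lt_iff] at hy; linarith
    have hM0 : 0 ≤ M := (abs_nonneg _).trans (hM τ hτ)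
    refine (norm_heatGxx_mul_le hs (hM τ hτ) y).trans ?_
    gcongr
    exact levyKernel_le_of_le (by nlinarith) hs
  obtain ⟨-, h⟩ := intervalIntegral.hasDerivAt_integral_of_dominated_loc_of_deriv_le
    (Metric.ball_mem_nhds x (half_pos hx)) (Filter.Eventually.of_forall hF_meas) hF_int hF'_meas
    h_bound (((intervalIntegrable_levyKernel_sub (by positivity) ht.le).const_mul _).mul_const M)
    (ae_of_all _ fun τ _ y _ => (hasDerivAt_heatGx (t - τ) y).mul_const (ψ τ))
  exact h.const_mul (-2)

theorem abs_integral_heatGxx_mul_le {T : ℝ} (hM : ∀ τ ∈ Ioc 0 t, |ψ τ| ≤ M) (ht : 0 < t)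
    (htT : t ≤ T) (hx : 0 < x) :
    |∫ τ in 0..t, heatGxx (t - τ) x * ψ τ| ≤ 4 * M * exp (-(x ^ 2 / 16) / T) / x := by
  have hM0 : 0 ≤ M := (abs_nonneg _).trans (hM t ⟨ht, le_rfl⟩)
  set c := (√π)⁻¹ * exp (-(x ^ 2 / 16) / T) * M with hc
  have hpt : ∀ τ ∈ Ioc 0 t, ‖heatGxx (t - τ) x * ψ τ‖ ≤ c * levyKernel (x ^ 2 / 16) (t - τ) := by
    intro τ hτ
    have hs : 0 ≤ t - τ := sub_nonneg.2 hτ.2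
    calc ‖heatGxx (t - τ) x * ψ τ‖
        ≤ (√π)⁻¹ * levyKernel (x ^ 2 / 16 + x ^ 2 / 16) (t - τ) * M := by
          convert norm_heatGxx_mul_le hs (hM τ hτ) x using 4; ring
      _ ≤ (√π)⁻¹ * (exp (-(x ^ 2 / 16) / T) * levyKernel (x ^ 2 / 16) (t - τ)) * M := by
          gcongr; exact levyKernel_add_le (by positivity) hs (by linarith [hτ.1])
      _ = c * levyKernel (x ^ 2 / 16) (t - τ) := by ring
  have hsqrt : √(π / (x ^ 2 / 16)) = 4 * √π / x := by
    rw [sqrt_div' _ (by positivity), show x ^ 2 / 16 = (x / 4) ^ 2 by ring, sqrt_sq (by positivity)]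
    field_simp
  calc |∫ τ in 0..t, heatGxx (t - τ) x * ψ τ|
      ≤ ∫ τ in 0..t, c * levyKernel (x ^ 2 / 16) (t - τ) :=
        intervalIntegral.norm_integral_le_of_norm_le ht.le (ae_of_all _ hpt)
          ((intervalIntegrable_levyKernel_sub (by positivity) ht.le).const_mul c)
    _ = c * ∫ τ in 0..t, levyKernel (x ^ 2 / 16) (t - τ) := intervalIntegral.integral_const_mul _ _
    _ ≤ c * √(π / (x ^ 2 / 16)) := by
        gcongr; exact integral_levyKernel_sub_le (by positivity) ht.le
    _ = 4 * M * exp (-(x ^ 2 / 16) / T) / x := by rw [hsqrt, hc]; field_simp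

end BoundaryDriven

lemma exp_neg_mul_sq_div_le {c x : ℝ} (hc : 0 ≤ c) (hx : 0 < x) :
    exp (-c * x ^ 2) / x ≤ if x ≤ 1 then x⁻¹ else exp (-c * x) := by
  split_ifs with h
  · rw [div_eq_mul_inv]
    exact mul_le_of_le_one_left (inv_nonneg.2 hx.le) (exp_le_one_iff.2 (by nlinarith))
  · rw [div_le_iff₀ hx]
    calc exp (-c * x ^ 2) ≤ exp (-c * x) :=
          exp_le_exp.2 (by nlinarith [mul_nonneg hc (by nlinarith : 0 ≤ x ^ 2 - x)])
      _ ≤ exp (-c * x) * x := le_mul_of_one_le_right (exp_nonneg _) (le_of_not_ge h)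

/-- Pointwise bound `|∂ₓu(t,x)| ≤ C(x^{−1}1_{x≤1} + e^{−cx}1_{x>1}) sup|ψ|` for the spatial
derivative of the boundary-driven heat solution, with constants depending only on `T`. -/
theorem stmt6 (T : ℝ) (hT : 0 < T) :
    ∃ C > (0 : ℝ), ∃ c > (0 : ℝ), ∀ ψ : ℝ → ℝ, Measurable ψ → ∀ M : ℝ,
      (∀ τ ∈ Set.Icc (0 : ℝ) T, |ψ τ| ≤ M) →
      ∀ t ∈ Set.Ioc (0 : ℝ) T, ∀ x : ℝ, 0 < x →
        |deriv (fun y => heatU ψ t y) x| ≤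
          C * (if x ≤ 1 then x⁻¹ else Real.exp (-c * x)) * M := by
  refine ⟨8, by norm_num, 1 / (16 * T), by positivity, fun ψ hψ M hM t ht x hx => ?_⟩
  have hM' : ∀ τ ∈ Ioc 0 t, |ψ τ| ≤ M := fun τ hτ => hM τ ⟨hτ.1.le, hτ.2.trans ht.2⟩
  have hM0 : 0 ≤ M := (abs_nonneg _).trans (hM' t ⟨ht.1, le_rfl⟩)
  rw [(hasDerivAt_heatU hψ hM' ht.1 hx).deriv, abs_mul, abs_neg, abs_two]
  calc 2 * |∫ τ in 0..t, heatGxx (t - τ) x * ψ τ|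
      ≤ 2 * (4 * M * exp (-(x ^ 2 / 16) / T) / x) := by
        gcongr; exact abs_integral_heatGxx_mul_le hM' ht.1 ht.2 hx
    _ = 8 * (exp (-(1 / (16 * T)) * x ^ 2) / x) * M := by
        rw [show -(x ^ 2 / 16) / T = -(1 / (16 * T)) * x ^ 2 by ring]; ring
    _ ≤ 8 * (if x ≤ 1 then x⁻¹ else exp (-(1 / (16 * T)) * x)) * M := by
        gcongr; exact exp_neg_mul_sq_div_le (by positivity) hx
end

section
/- Let λ > 0, B ∈ {1, −1}, φ(c) = 1 + Bc, T > 0, η > 0, and let C₀ > 0 with additionally C₀ < 1 in the case B = −1. Let c₀ ∈ [0, C₀] and let f : [0,T] → ℝ be Borel measurable with 0 ≤ f(t) ≤ η for all t. Define g(t) = c₀ / (φ(c₀) e^{λ∫₀ᵗ f(τ)dτ} − Bc₀). Then: (i) the denominator φ(c₀) e^{λ∫₀ᵗ f(τ)dτ} − Bc₀ is bounded below by a positive constant depending only on C₀ and B; (ii) 0 ≤ g(t) ≤ C₀ for every t ∈ [0,T]; (iii) there exists a constant C > 0, depending only on λ, C₀, η, T and B, such that |g(t) − g(s)| ≤ C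 ∫ₛᵗ f(r) dr for all 0 ≤ s ≤ t ≤ T. -/
/-- The explicit solution `g(t) = c₀ / (φ(c₀) e^{λ∫₀ᵗ f} − Bc₀)` of the calcite ODE
`g' = −λφ(g)fg`, with porosity `φ(c) = 1 + Bc`. -/
noncomputable def calciteSol (lam B c₀ : ℝ) (f : ℝ → ℝ) (t : ℝ) : ℝ :=
  c₀ / ((1 + B * c₀) * Real.exp (lam * ∫ τ in (0 : ℝ)..t, f τ) - B * c₀)

lemma calcite_exp_sub_one_le (x : ℝ) : Real.exp x - 1 ≤ x * Real.exp x := by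
  have h : Real.exp x * Real.exp (-x) = 1 := by rw [← Real.exp_add]; simp
  nlinarith [Real.add_one_le_exp (-x), Real.exp_pos x]

lemma calcite_intInt {T η : ℝ} {f : ℝ → ℝ} (hf : Measurable f)
    (hfb : ∀ t ∈ Set.Icc (0:ℝ) T, 0 ≤ f t ∧ f t ≤ η) {s t : ℝ}
    (hs : 0 ≤ s) (hst : s ≤ t) (hT : t ≤ T) :
    IntervalIntegrable f MeasureTheory.volume s t := by
  apply IntervalIntegrable.mono_fun' (g := fun _ => η) intervalIntegrable_const
    hf.aestronglyMeasurable.restrict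
  filter_upwards [MeasureTheory.ae_restrict_mem measurableSet_uIoc] with x hx
  rw [Set.uIoc_of_le hst] at hx
  have hxm : x ∈ Set.Icc (0:ℝ) T := ⟨le_trans hs hx.1.le, le_trans hx.2 hT⟩
  have h := hfb x hxm
  simp only [Real.norm_eq_abs, abs_of_nonneg h.1]
  exact h.2

lemma calcite_step {lam B c₀ C₀ η T Fs Ft I : ℝ}
    (hlam : 0 < lam) (hc0 : 0 ≤ c₀) (hcC : c₀ ≤ C₀)
    (hA : 0 < 1 + B * c₀) (hAle : 1 + B * c₀ ≤ 1 + C₀)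
    (hI : 0 ≤ I) (hFtUB : Ft ≤ η * T) (hadd : Fs + I = Ft)
    (hDs : 1 ≤ (1 + B * c₀) * Real.exp (lam * Fs) - B * c₀)
    (hDt : 1 ≤ (1 + B * c₀) * Real.exp (lam * Ft) - B * c₀) :
    c₀ / ((1 + B * c₀) * Real.exp (lam * Fs) - B * c₀)
      - c₀ / ((1 + B * c₀) * Real.exp (lam * Ft) - B * c₀)
      ≤ lam * C₀ * (1 + C₀) * Real.exp (lam * η * T) * I := by
  set Ds := (1 + B * c₀) * Real.exp (lam * Fs) - B * c₀ with hDsdef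
  set Dt := (1 + B * c₀) * Real.exp (lam * Ft) - B * c₀ with hDtdef
  have hds0 : (0:ℝ) < Ds := by linarith
  have hdt0 : (0:ℝ) < Dt := by linarith
  have hFsFt : lam * Fs ≤ lam * Ft := by nlinarith
  have hXnn : 0 ≤ Real.exp (lam * Ft) - Real.exp (lam * Fs) :=
    sub_nonneg.2 (Real.exp_le_exp.2 hFsFt)
  have hkey : Real.exp (lam * Ft) - Real.exp (lam * Fs)
      ≤ Real.exp (lam * Ft) * (lam * I) := by
    have hFteq : lam * Ft = lam * Fs + lam * I := by rw [← hadd]; ring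
    have he : Real.exp (lam * Ft) = Real.exp (lam * Fs) * Real.exp (lam * I) := by
      rw [hFteq, Real.exp_add]
    have h2 := calcite_exp_sub_one_le (lam * I)
    have h3 := (Real.exp_pos (lam * Fs)).le
    rw [he]
    nlinarith [mul_le_mul_of_nonneg_left h2 h3]
  have hEtUB : Real.exp (lam * Ft) ≤ Real.exp (lam * η * T) := by
    apply Real.exp_le_exp.2
    nlinarith
  have hEt0 := Real.exp_pos (lam * Ft)
  have hstep : Real.exp (lam * Ft) - Real.exp (lam * Fs)
      ≤ Real.exp (lam * η * T) * (lam * I) :=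
    hkey.trans (mul_le_mul_of_nonneg_right hEtUB (mul_nonneg hlam.le hI))
  have h1 : (1 + B * c₀) * (Real.exp (lam * Ft) - Real.exp (lam * Fs))
      ≤ (1 + C₀) * (Real.exp (lam * η * T) * (lam * I)) :=
    mul_le_mul hAle hstep hXnn (by linarith)
  have h2 : c₀ * ((1 + B * c₀) * (Real.exp (lam * Ft) - Real.exp (lam * Fs)))
      ≤ C₀ * ((1 + C₀) * (Real.exp (lam * η * T) * (lam * I))) :=
    mul_le_mul hcC h1 (mul_nonneg hA.le hXnn) (hc0.trans hcC)
  calc c₀ / Ds - c₀ / Dt = c₀ * (Dt - Ds) / (Ds * Dt) := by field_simp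
    _ ≤ c₀ * (Dt - Ds) := by
        have hnum : 0 ≤ c₀ * (Dt - Ds) := by
          apply mul_nonneg hc0
          rw [hDsdef, hDtdef]
          nlinarith
        have hdd : 1 ≤ Ds * Dt := by nlinarith
        exact div_le_self hnum hdd
    _ = c₀ * ((1 + B * c₀) * (Real.exp (lam * Ft) - Real.exp (lam * Fs))) := by
        rw [hDsdef, hDtdef]; ring
    _ ≤ C₀ * ((1 + C₀) * (Real.exp (lam * η * T) * (lam * I))) := h2
    _ = lam * C₀ * (1 + C₀) * Real.exp (lam * η * T) * I := by ring

/-- Bounds for the explicit calcite solution: (i) the denominator is bounded below by a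
positive constant depending only on `C₀` and `B`; (ii) `0 ≤ g ≤ C₀`; (iii) a continuity
estimate `|g(t) − g(s)| ≤ C ∫ₛᵗ f`. -/
theorem stmt16 (lam B T η C₀ : ℝ) (hlam : 0 < lam) (hB : B = 1 ∨ B = -1) (hT : 0 < T)
    (hη : 0 < η) (hC₀ : 0 < C₀) (hC₀B : B = -1 → C₀ < 1) :
    ∃ ε > (0 : ℝ), ∃ C > (0 : ℝ), ∀ c₀ ∈ Set.Icc (0 : ℝ) C₀, ∀ f : ℝ → ℝ, Measurable f →
      (∀ t ∈ Set.Icc (0 : ℝ) T, 0 ≤ f t ∧ f t ≤ η) →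
      (∀ t ∈ Set.Icc (0 : ℝ) T,
        ε ≤ (1 + B * c₀) * Real.exp (lam * ∫ τ in (0 : ℝ)..t, f τ) - B * c₀) ∧
      (∀ t ∈ Set.Icc (0 : ℝ) T,
        0 ≤ calciteSol lam B c₀ f t ∧ calciteSol lam B c₀ f t ≤ C₀) ∧
      (∀ s t : ℝ, 0 ≤ s → s ≤ t → t ≤ T →
        |calciteSol lam B c₀ f t - calciteSol lam B c₀ f s| ≤ C * ∫ r in s..t, f r) := by
  refine ⟨1, one_pos, lam * C₀ * (1 + C₀) * Real.exp (lam * η * T), by positivity, ?_⟩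
  rintro c₀ ⟨hc0, hcC⟩ f hf hfb
  have hA : 0 < 1 + B * c₀ := by
    rcases hB with h | h <;> subst h
    · nlinarith
    · have := hC₀B rfl; nlinarith
  have hAle : 1 + B * c₀ ≤ 1 + C₀ := by
    rcases hB with h | h <;> subst h <;> nlinarith
  have hInt : ∀ s t : ℝ, 0 ≤ s → s ≤ t → t ≤ T →
      IntervalIntegrable f MeasureTheory.volume s t :=
    fun s t hs hst ht => calcite_intInt hf hfb hs hst ht
  have hIntNN : ∀ s t : ℝ, 0 ≤ s → s ≤ t → t ≤ T → 0 ≤ ∫ r in s..t, f r := by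
    intro s t hs hst ht
    apply intervalIntegral.integral_nonneg hst
    intro u hu
    exact (hfb u ⟨le_trans hs hu.1, le_trans hu.2 ht⟩).1
  have hIntUB : ∀ t : ℝ, 0 ≤ t → t ≤ T → (∫ r in (0:ℝ)..t, f r) ≤ η * T := by
    intro t ht hT'
    calc (∫ r in (0:ℝ)..t, f r) ≤ ∫ _ in (0:ℝ)..t, η := by
          apply intervalIntegral.integral_mono_on ht (hInt 0 t le_rfl ht hT')
            intervalIntegrable_const
          intro u hu; exact (hfb u ⟨hu.1, hu.2.trans hT'⟩).2
      _ = η * t := by simp [mul_comm]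
      _ ≤ η * T := by nlinarith
  have hden : ∀ t ∈ Set.Icc (0:ℝ) T,
      1 ≤ (1 + B * c₀) * Real.exp (lam * ∫ τ in (0:ℝ)..t, f τ) - B * c₀ := by
    intro t ht
    have hF : 0 ≤ ∫ τ in (0:ℝ)..t, f τ := hIntNN 0 t le_rfl ht.1 ht.2
    have hE : 1 ≤ Real.exp (lam * ∫ τ in (0:ℝ)..t, f τ) := Real.one_le_exp (by positivity)
    nlinarith
  refine ⟨hden, ?_, ?_⟩
  · intro t ht
    have h1 := hden t ht
    unfold calciteSol
    constructor
    · exact div_nonneg hc0 (by linarith)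
    · exact le_trans (div_le_self hc0 h1) hcC
  · intro s t hs hst ht
    have hsT : s ≤ T := hst.trans ht
    have hI : 0 ≤ ∫ r in s..t, f r := hIntNN s t hs hst ht
    have hadd : (∫ r in (0:ℝ)..s, f r) + (∫ r in s..t, f r) = ∫ r in (0:ℝ)..t, f r :=
      intervalIntegral.integral_add_adjacent_intervals (hInt 0 s le_rfl hs hsT)
        (hInt s t hs hst ht)
    set Fs := ∫ r in (0:ℝ)..s, f r with hFs
    set Ft := ∫ r in (0:ℝ)..t, f r with hFt
    set I := ∫ r in s..t, f r with hIdef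
    have hFtUB : Ft ≤ η * T := hIntUB t (hs.trans hst) ht
    have hDs : 1 ≤ (1 + B * c₀) * Real.exp (lam * Fs) - B * c₀ := hden s ⟨hs, hsT⟩
    have hDt : 1 ≤ (1 + B * c₀) * Real.exp (lam * Ft) - B * c₀ := hden t ⟨hs.trans hst, ht⟩
    have hgle : calciteSol lam B c₀ f t ≤ calciteSol lam B c₀ f s := by
      unfold calciteSol
      rw [← hFs, ← hFt]
      have hEle : Real.exp (lam * Fs) ≤ Real.exp (lam * Ft) := by
        apply Real.exp_le_exp.2; nlinarith
      apply div_le_div_of_nonneg_left hc0 (by nlinarith) (by nlinarith)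
    have habs : |calciteSol lam B c₀ f t - calciteSol lam B c₀ f s|
        = calciteSol lam B c₀ f s - calciteSol lam B c₀ f t := by
      rw [abs_sub_comm, abs_of_nonneg (by linarith)]
    rw [habs]
    show calciteSol lam B c₀ f s - calciteSol lam B c₀ f t
        ≤ lam * C₀ * (1 + C₀) * Real.exp (lam * η * T) * I
    unfold calciteSol
    rw [← hFs, ← hFt]
    exact calcite_step hlam hc0 hcC hA hAle hI hFtUB hadd hDs hDt
end

section
/- Let λ > 0, B ∈ {1, −1}, φ(c) = 1 + Bc, T > 0, η > 0, and let C₀ > 0 with additionally C₀ < 1 in the case B = −1. Let f : [0,T] → ℝ be Borel measurable with 0 ≤ f(t) ≤ η for all t, let c₀,₁, c₀,₂ ∈ [0, C₀], and define gᵢ(t) = c₀,ᵢ / (φ(c₀,ᵢ) e^{λ∫₀ᵗ f(τ)dτ} − Bc₀,ᵢ) for i = 1, 2. Then there exists a constant C > 0, depending only on λ, C₀, η, T and B, such that |g₁(t) − g₂(t)| ≤ C |c₀,₁ − c₀,₂| for every t ∈ [0,T]. -/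
/-- Lipschitz stability of the explicit calcite solution with respect to its initial value:
`|g₁(t) − g₂(t)| ≤ C |c₀,₁ − c₀,₂|` with `C` depending only on `λ, C₀, η, T, B`. -/
theorem stmt17 (lam B T η C₀ : ℝ) (hlam : 0 < lam) (hB : B = 1 ∨ B = -1) (hT : 0 < T)
    (hη : 0 < η) (hC₀ : 0 < C₀) (hC₀B : B = -1 → C₀ < 1) :
    ∃ C > (0 : ℝ), ∀ f : ℝ → ℝ, Measurable f →
      (∀ t ∈ Set.Icc (0 : ℝ) T, 0 ≤ f t ∧ f t ≤ η) →
      ∀ c₁ ∈ Set.Icc (0 : ℝ) C₀, ∀ c₂ ∈ Set.Icc (0 : ℝ) C₀,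
      ∀ t ∈ Set.Icc (0 : ℝ) T,
        |calciteSol lam B c₁ f t - calciteSol lam B c₂ f t| ≤ C * |c₁ - c₂| := by
  refine ⟨Real.exp (lam * η * T), Real.exp_pos _, ?_⟩
  intro f hf hfb c₁ hc₁ c₂ hc₂ t ht
  obtain ⟨ht0, htT⟩ := ht
  obtain ⟨hc₁0, hc₁C⟩ := hc₁
  obtain ⟨hc₂0, hc₂C⟩ := hc₂
  -- integrability of f on [0,t]
  have hsub : Set.uIoc (0:ℝ) t ⊆ Set.Icc 0 T := by
    rw [Set.uIoc_of_le ht0]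
    exact fun x hx => ⟨le_of_lt hx.1, hx.2.trans htT⟩
  have hfi : IntervalIntegrable f MeasureTheory.volume 0 t := by
    rw [intervalIntegrable_iff]
    apply MeasureTheory.Measure.integrableOn_of_bounded (M := η)
    · rw [Set.uIoc_of_le ht0, Real.volume_Ioc]
      exact ENNReal.ofReal_ne_top
    · exact hf.aestronglyMeasurable
    · refine (MeasureTheory.ae_restrict_iff' measurableSet_uIoc).2 ?_
      filter_upwards with x hx
      have := hfb x (hsub hx)
      rw [Real.norm_eq_abs, abs_le]
      constructor <;> linarith [this.1, this.2]
  set I := ∫ τ in (0:ℝ)..t, f τ with hI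
  have hI0 : 0 ≤ I := by
    apply intervalIntegral.integral_nonneg ht0
    intro u hu
    exact (hfb u ⟨hu.1, hu.2.trans htT⟩).1
  have hIle : I ≤ η * t := by
    calc I ≤ ∫ τ in (0:ℝ)..t, η := by
            apply intervalIntegral.integral_mono_on ht0 hfi intervalIntegrable_const
            intro u hu
            exact (hfb u ⟨hu.1, hu.2.trans htT⟩).2
      _ = η * t := by simp [mul_comm]
  set E := Real.exp (lam * I) with hE
  have hE1 : 1 ≤ E := Real.one_le_exp (by positivity)
  have hEC : E ≤ Real.exp (lam * η * T) := by
    apply Real.exp_le_exp.2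
    nlinarith [mul_le_mul_of_nonneg_left hIle hlam.le,
      mul_le_mul_of_nonneg_left htT (mul_pos hlam hη).le]
  have hD : ∀ c ∈ Set.Icc (0:ℝ) C₀, 1 ≤ (1 + B * c) * E - B * c := by
    intro c hc
    rcases hB with hB | hB
    · subst hB; nlinarith [hc.1, hc.2]
    · subst hB
      have hcl : c < 1 := lt_of_le_of_lt hc.2 (hC₀B rfl)
      nlinarith [hc.1]
  have hD₁ := hD c₁ ⟨hc₁0, hc₁C⟩
  have hD₂ := hD c₂ ⟨hc₂0, hc₂C⟩
  have hD₁0 : (0:ℝ) < (1 + B * c₁) * E - B * c₁ := by linarith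
  have hD₂0 : (0:ℝ) < (1 + B * c₂) * E - B * c₂ := by linarith
  rw [calciteSol, calciteSol, ← hI, ← hE,
    div_sub_div _ _ (ne_of_gt hD₁0) (ne_of_gt hD₂0)]
  have hnum : c₁ * ((1 + B * c₂) * E - B * c₂) - ((1 + B * c₁) * E - B * c₁) * c₂
      = E * (c₁ - c₂) := by ring
  rw [hnum, abs_div, abs_mul]
  rw [abs_of_pos (by nlinarith : (0:ℝ) < ((1 + B * c₁) * E - B * c₁) * ((1 + B * c₂) * E - B * c₂))]
  rw [div_le_iff₀ (by nlinarith)]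
  have hEabs : |E| = E := abs_of_pos (by linarith)
  rw [hEabs]
  have hDD : (1:ℝ) ≤ ((1 + B * c₁) * E - B * c₁) * ((1 + B * c₂) * E - B * c₂) := by nlinarith
  calc E * |c₁ - c₂| ≤ Real.exp (lam * η * T) * |c₁ - c₂| :=
        mul_le_mul_of_nonneg_right hEC (abs_nonneg _)
    _ ≤ Real.exp (lam * η * T) * |c₁ - c₂| *
        (((1 + B * c₁) * E - B * c₁) * ((1 + B * c₂) * E - B * c₂)) :=
        le_mul_of_one_le_right (by positivity) hDD
end
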